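/- arXiv:2203.08380 — 2 statements merged into one kernel-verified Lean document; each statement's English description precedes it below -/
import Mathlib

section
/- Let τ, η₁ > 0, η₂ ≥ 0, Δx > 0, and set ζ = (1 + τη₁/Δx² + τη₂/2)⁻¹. Let u*, ψ, f : Fin (M+1) → ℝ with Dirichlet boundary values fixed, and suppose for every interior index i (1 ≤ i ≤ M−1) that min(−η₁(u*_{i−1} − 2u*_i + u*_{i+1})/Δx² + η₂ u*_i − f_i, u*_i − ψ_i) = 0. Then the forward-sweep constrained ADE update defined recursively by v₀ = u*₀ and v_i = max(ψ_i, ζ(u*_i + τ f_i + (τη₁/Δx²)(v_{i−1} − u*_i + u*_{i+1}) − (τη₂/2) u*_i)) for i = 1,…,M−1 satisfies v_i = u*_i for all i. -/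
/-- Forward-sweep half of Theorem 4.1: a solution of the discrete obstacle
complementarity problem is a fixed point of the forward constrained ADE sweep. -/
theorem cade_forward_sweep_fixed_point
    (M : ℕ) (hM : 2 ≤ M)
    (τ η₁ η₂ Δx : ℝ) (hτ : 0 < τ) (hη₁ : 0 < η₁) (hη₂ : 0 ≤ η₂) (hΔx : 0 < Δx)
    (ζ : ℝ) (hζ : ζ = (1 + τ * η₁ / Δx ^ 2 + τ * η₂ / 2)⁻¹)
    (u ψ f : Fin (M + 1) → ℝ)
    (hopt : ∀ i : Fin (M + 1), 1 ≤ (i : ℕ) → (i : ℕ) ≤ M - 1 →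
      min (-η₁ * (u (i - 1) - 2 * u i + u (i + 1)) / Δx ^ 2 + η₂ * u i - f i)
          (u i - ψ i) = 0)
    (v : Fin (M + 1) → ℝ)
    (hv0 : v 0 = u 0) (hvM : v (Fin.last M) = u (Fin.last M))
    (hvrec : ∀ i : Fin (M + 1), 1 ≤ (i : ℕ) → (i : ℕ) ≤ M - 1 →
      v i = max (ψ i)
        (ζ * (u i + τ * f i + (τ * η₁ / Δx ^ 2) * (v (i - 1) - u i + u (i + 1))
          - (τ * η₂ / 2) * u i))) :
    ∀ i, v i = u i := by
  have hD : (0:ℝ) < 1 + τ * η₁ / Δx ^ 2 + τ * η₂ / 2 := by positivity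
  have hζpos : 0 < ζ := by rw [hζ]; exact inv_pos.2 hD
  have key : ∀ n : ℕ, ∀ hn : n < M + 1, v ⟨n, hn⟩ = u ⟨n, hn⟩ := by
    intro n
    induction n with
    | zero => intro hn; exact hv0
    | succ k ih =>
      intro hn
      by_cases hk : k + 1 ≤ M - 1
      · set i : Fin (M + 1) := ⟨k + 1, hn⟩ with hi
        have h1 : 1 ≤ (i : ℕ) := by simp [hi]
        have him1 : i - 1 = ⟨k, by omega⟩ := by
          apply Fin.ext
          simp only [Fin.sub_def, Fin.val_one']
          rw [Nat.mod_eq_of_lt (show (1:ℕ) < M + 1 by omega)]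
          show (M + 1 - 1 + (k + 1)) % (M + 1) = k
          have he : M + 1 - 1 + (k + 1) = k + (M + 1) := by omega
          rw [he, Nat.add_mod_right, Nat.mod_eq_of_lt (by omega)]
        have hrec := hvrec i h1 hk
        have hA := hopt i h1 hk
        rw [him1, ih] at hrec
        set A : ℝ := -η₁ * (u (i - 1) - 2 * u i + u (i + 1)) / Δx ^ 2 + η₂ * u i - f i with hAe
        have hA0 : 0 ≤ A := by
          have := min_le_left A (u i - ψ i); rw [hA] at this; linarith
        have hψ : ψ i ≤ u i := by
          have := min_le_right A (u i - ψ i); rw [hA] at this; linarith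
        have hcase : A = 0 ∨ u i = ψ i := by
          rcases min_eq_iff.mp hA with ⟨h, _⟩ | ⟨h, _⟩
          · left; exact h
          · right; linarith
        have hc : ζ * (u i + τ * f i + (τ * η₁ / Δx ^ 2) * (u (i - 1) - u i + u (i + 1))
            - (τ * η₂ / 2) * u i) = u i - ζ * τ * A := by
          rw [hζ, hAe]
          field_simp
          ring
        rw [him1] at hc
        rw [hrec, hc]
        have hτA : 0 ≤ ζ * τ * A := by positivity
        rcases hcase with h | h
        · rw [h]; simp [max_eq_right hψ]
        · rw [← h]
          exact max_eq_left (by linarith)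
      · have hkM : k + 1 = M := by omega
        have : (⟨k + 1, hn⟩ : Fin (M + 1)) = Fin.last M := by
          apply Fin.ext; simp [hkM]
        rw [this]; exact hvM
  intro i
  have := key i.val i.isLt
  simpa using this
end

section
/- Under the same hypotheses as the forward-sweep case, the backward-sweep constrained ADE update defined by w_M = u*_M and, for i = M−1 down to 1, w_i = max(ψ_i, ζ(u*_i + τ f_i + (τη₁/Δx²)(w_{i+1} − u*_i + u*_{i−1}) − (τη₂/2) u*_i)), satisfies w_i = u*_i for all i. Consequently, the full CADE step u ↦ (v + w)/2 fixes u*, i.e., u* is a steady state of the CADE scheme. -/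
set_option maxHeartbeats 1000000


/-- Theorem 4.1: a solution of the discrete obstacle complementarity problem is a
steady state of the full constrained ADE scheme (backward sweep and averaging). -/
theorem cade_steady_state
    (M : ℕ) (hM : 2 ≤ M)
    (τ η₁ η₂ Δx : ℝ) (hτ : 0 < τ) (hη₁ : 0 < η₁) (hη₂ : 0 ≤ η₂) (hΔx : 0 < Δx)
    (ζ : ℝ) (hζ : ζ = (1 + τ * η₁ / Δx ^ 2 + τ * η₂ / 2)⁻¹)
    (u ψ f : Fin (M + 1) → ℝ)
    (hopt : ∀ i : Fin (M + 1), 1 ≤ (i : ℕ) → (i : ℕ) ≤ M - 1 →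
      min (-η₁ * (u (i - 1) - 2 * u i + u (i + 1)) / Δx ^ 2 + η₂ * u i - f i)
          (u i - ψ i) = 0)
    (v w : Fin (M + 1) → ℝ)
    (hv0 : v 0 = u 0) (hvM : v (Fin.last M) = u (Fin.last M))
    (hvrec : ∀ i : Fin (M + 1), 1 ≤ (i : ℕ) → (i : ℕ) ≤ M - 1 →
      v i = max (ψ i)
        (ζ * (u i + τ * f i + (τ * η₁ / Δx ^ 2) * (v (i - 1) - u i + u (i + 1))
          - (τ * η₂ / 2) * u i)))
    (hw0 : w 0 = u 0) (hwM : w (Fin.last M) = u (Fin.last M))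
    (hwrec : ∀ i : Fin (M + 1), 1 ≤ (i : ℕ) → (i : ℕ) ≤ M - 1 →
      w i = max (ψ i)
        (ζ * (u i + τ * f i + (τ * η₁ / Δx ^ 2) * (w (i + 1) - u i + u (i - 1))
          - (τ * η₂ / 2) * u i))) :
    (∀ i, w i = u i) ∧ (∀ i, (v i + w i) / 2 = u i) := by
  have hdenom : (0 : ℝ) < 1 + τ * η₁ / Δx ^ 2 + τ * η₂ / 2 := by positivity
  have hζpos : 0 < ζ := by rw [hζ]; exact inv_pos.mpr hdenom
  have hone : (1 : ℕ) % (M + 1) = 1 := Nat.mod_eq_of_lt (by omega)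
  -- fin arithmetic helpers
  have hsub : ∀ (k : ℕ) (hk : k < M + 1) (h1 : 1 ≤ k),
      (⟨k, hk⟩ : Fin (M + 1)) - 1 = ⟨k - 1, by omega⟩ := by
    intro k hk h1
    apply Fin.ext
    rw [Fin.sub_def]
    simp only [Fin.val_one', hone]
    have h : M + 1 - 1 + k = (k - 1) + (M + 1) := by omega
    rw [h, Nat.add_mod_right]
    exact Nat.mod_eq_of_lt (by omega)
  have hadd : ∀ (k : ℕ) (hk : k < M + 1) (h1 : k < M),
      (⟨k, hk⟩ : Fin (M + 1)) + 1 = ⟨k + 1, by omega⟩ := by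
    intro k hk h1
    apply Fin.ext
    rw [Fin.add_def]
    simp only [Fin.val_one', hone]
    exact Nat.mod_eq_of_lt (by omega)
  -- key fixed-point identity
  have key : ∀ i : Fin (M + 1), 1 ≤ (i : ℕ) → (i : ℕ) ≤ M - 1 →
      max (ψ i) (ζ * (u i + τ * f i + (τ * η₁ / Δx ^ 2) * (u (i + 1) - u i + u (i - 1))
          - (τ * η₂ / 2) * u i)) = u i := by
    intro i h1 h2
    have hmin := hopt i h1 h2
    have hA0 : (0 : ℝ) ≤ -η₁ * (u (i - 1) - 2 * u i + u (i + 1)) / Δx ^ 2 + η₂ * u i - f i :=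
      hmin ▸ min_le_left _ _
    have hψ0 : ψ i ≤ u i := by
      have := hmin ▸ min_le_right
        (-η₁ * (u (i - 1) - 2 * u i + u (i + 1)) / Δx ^ 2 + η₂ * u i - f i) (u i - ψ i)
      linarith
    have hS : ζ * (u i + τ * f i + (τ * η₁ / Δx ^ 2) * (u (i + 1) - u i + u (i - 1))
          - (τ * η₂ / 2) * u i)
        = u i - τ * ζ * (-η₁ * (u (i - 1) - 2 * u i + u (i + 1)) / Δx ^ 2 + η₂ * u i - f i) := by
      rw [hζ]
      have h2' : Δx ^ 2 ≠ 0 := by positivity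
      field_simp
      ring
    rw [hS]
    rcases min_eq_iff.mp hmin with ⟨hAe, _⟩ | ⟨he, _⟩
    · rw [hAe, mul_zero, sub_zero]
      exact max_eq_right hψ0
    · have hle : u i - τ * ζ * (-η₁ * (u (i - 1) - 2 * u i + u (i + 1)) / Δx ^ 2
          + η₂ * u i - f i) ≤ ψ i := by
        nlinarith [mul_nonneg (mul_nonneg hτ.le hζpos.le) hA0]
      rw [max_eq_left hle]
      linarith
  -- forward sweep
  have hv : ∀ (j : ℕ) (hj : j ≤ M), v ⟨j, by omega⟩ = u ⟨j, by omega⟩ := by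
    intro j
    induction j with
    | zero => intro _; exact hv0
    | succ n ih =>
      intro hj
      by_cases hn : n + 1 = M
      · have he : (⟨n + 1, by omega⟩ : Fin (M + 1)) = Fin.last M := by
          apply Fin.ext; simp [hn]
        rw [he]; exact hvM
      · have h1 : 1 ≤ n + 1 := by omega
        have h2 : n + 1 ≤ M - 1 := by omega
        have hrec := hvrec ⟨n + 1, by omega⟩ h1 h2
        rw [hsub (n + 1) (by omega) h1] at hrec
        simp only [Nat.add_sub_cancel] at hrec
        rw [ih (by omega)] at hrec
        have hcomm : u (⟨n, by omega⟩ : Fin (M + 1)) - u ⟨n + 1, by omega⟩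
              + u ((⟨n + 1, by omega⟩ : Fin (M + 1)) + 1)
            = u ((⟨n + 1, by omega⟩ : Fin (M + 1)) + 1) - u ⟨n + 1, by omega⟩
              + u ⟨n, by omega⟩ := by ring
        rw [hcomm] at hrec
        have hk := key ⟨n + 1, by omega⟩ h1 h2
        rw [hsub (n + 1) (by omega) h1] at hk
        simp only [Nat.add_sub_cancel] at hk
        rw [hrec]
        exact hk
  -- backward sweep
  have hw : ∀ (j : ℕ) (hj : j ≤ M), w ⟨M - j, by omega⟩ = u ⟨M - j, by omega⟩ := by
    intro j
    induction j with
    | zero =>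
      intro _
      have he : (⟨M - 0, by omega⟩ : Fin (M + 1)) = Fin.last M := by
        apply Fin.ext; simp
      rw [he]; exact hwM
    | succ n ih =>
      intro hj
      by_cases hn : n + 1 = M
      · have he : (⟨M - (n + 1), by omega⟩ : Fin (M + 1)) = 0 := by
          apply Fin.ext; simp; omega
        rw [he]; exact hw0
      · have h1 : 1 ≤ M - (n + 1) := by omega
        have h2 : M - (n + 1) ≤ M - 1 := by omega
        have hrec := hwrec ⟨M - (n + 1), by omega⟩ h1 h2
        have haddeq : (⟨M - (n + 1), by omega⟩ : Fin (M + 1)) + 1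
            = (⟨M - n, by omega⟩ : Fin (M + 1)) := by
          rw [hadd (M - (n + 1)) (by omega) (by omega)]
          apply Fin.ext; simp; omega
        rw [haddeq] at hrec
        rw [ih (by omega)] at hrec
        rw [← haddeq] at hrec
        rw [hrec]
        exact key ⟨M - (n + 1), by omega⟩ h1 h2
  have hwall : ∀ i : Fin (M + 1), w i = u i := by
    intro i
    have hi : (i : ℕ) ≤ M := by omega
    have h := hw (M - (i : ℕ)) (by omega)
    have heq : (⟨M - (M - (i : ℕ)), by omega⟩ : Fin (M + 1)) = i := by
      apply Fin.ext; simp; omega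
    rwa [heq] at h
  have hvall : ∀ i : Fin (M + 1), v i = u i := by
    intro i
    have h := hv (i : ℕ) (by omega)
    have heq : (⟨(i : ℕ), by omega⟩ : Fin (M + 1)) = i := by
      apply Fin.ext; simp
    rwa [heq] at h
  exact ⟨hwall, fun i => by rw [hvall i, hwall i]; ring⟩
end
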